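/- arXiv:1404.0544 — 4 statements merged into one kernel-verified Lean document; each statement's English description precedes it below -/
import Mathlib

section
/- For every N ≥ 1 and every subset A ⊆ Ω_N, the weights w_N satisfy the stationary master equation of the mean-field spin-flip dynamics: Σ_{x ∈ A} w_N(A \ {x}) · Λ((|A|−1)/N) + Σ_{x ∈ Ω_N \ A} w_N(A ∪ {x}) · M((|A|+1)/N) = w_N(A) · [ |A| · M(|A|/N) + (N−|A|) · Λ(|A|/N) ]. Equivalently, since w_N(C) depends only on |C|: |A| · w_{|A|−1} · Λ((|A|−1)/N) + (N−|A|) · w_{|A|+1} · M((|A|+1)/N) = w_{|A|} · [ |A| · M(|A|/N) + (N−|A|) · Λ(|A|/N) ], where w_k = ∏_{m=0}^{k−1} f_N(m/N). -/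
/-!
`w_N` depends on a set only through its cardinality, so the master equation reduces to the
cardinality form. There it follows from detailed balance of the birth–death chain on
`{0, …, N}`: by construction of the product weights, `w_{k+1} · M((k+1)/N) = w_k · Λ(k/N)`,
so the `k` death terms on the left match `k · w_k · M(k/N)` and the `N − k` birth terms
match `(N − k) · w_k · Λ(k/N)`.
-/

open Finset

namespace Finset

variable {α M : Type*} [DecidableEq α] [AddCommMonoid M]

theorem sum_card_erase (s : Finset α) (f : ℕ → M) :
    ∑ x ∈ s, f (s.erase x).card = s.card • f (s.card - 1) := by
  rw [sum_congr rfl fun x hx => by rw [card_erase_of_mem hx], sum_const]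

theorem sum_card_insert_sdiff {s t : Finset α} (hst : s ⊆ t) (f : ℕ → M) :
    ∑ x ∈ t \ s, f (insert x s).card = (t.card - s.card) • f (s.card + 1) := by
  rw [sum_congr rfl fun x hx => by rw [card_insert_of_notMem (mem_sdiff.mp hx).2], sum_const,
    card_sdiff_of_subset hst]

end Finset

namespace BirthDeath

variable (birth death : ℝ → ℝ)

noncomputable def weight (k : ℕ) : ℝ :=
  ∏ m ∈ range k, birth m / death (m + 1)

variable {death}

theorem weight_succ_mul_death {k : ℕ} (hk : death (k + 1) ≠ 0) :
    weight birth death (k + 1) * death (k + 1) = weight birth death k * birth k := by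
  rw [weight, prod_range_succ, mul_assoc, div_mul_cancel₀ _ hk, weight]

/-- At `k = 0`, `birth` is evaluated at `-1` (a real argument, not a truncated `0 - 1`); that term
is killed by the factor `k`. -/
theorem weight_balance {N k : ℕ} (hk : k ≤ N) (hdeath : ∀ j < N, death (j + 1) ≠ 0) :
    k * weight birth death (k - 1) * birth ((k : ℝ) - 1)
        + ((N : ℝ) - k) * weight birth death (k + 1) * death ((k : ℝ) + 1)
      = weight birth death k * (k * death k + ((N : ℝ) - k) * birth k) := by
  have hdeaths : k * (weight birth death (k - 1) * birth ((k : ℝ) - 1))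
      = k * (weight birth death k * death k) := by
    obtain _ | j := k
    · simp
    · have h := weight_succ_mul_death birth (hdeath j (by omega))
      push_cast at h ⊢
      rw [add_sub_cancel_right, h]
  have hbirths : ((N : ℝ) - k) * (weight birth death (k + 1) * death ((k : ℝ) + 1))
      = ((N : ℝ) - k) * (weight birth death k * birth k) := by
    obtain rfl | hlt := hk.eq_or_lt
    · simp
    · rw [weight_succ_mul_death birth (hdeath k hlt)]
  linear_combination hdeaths + hbirths

end BirthDeath

open BirthDeath in
theorem stmt_1_general (Λ M : ℝ → ℝ)
    (hMpos : ∀ y ∈ Set.Icc (0:ℝ) 1, 0 < M y)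
    (N : ℕ)
    (w : Finset ℕ → ℝ)
    (hw : ∀ C : Finset ℕ,
      w C = ∏ m ∈ Finset.range C.card, Λ (m / N) / M (m / N + 1 / N))
    (A : Finset ℕ) (hA : A ⊆ Finset.range N) :
    ((∑ x ∈ A, w (A.erase x) * Λ (((A.card : ℝ) - 1) / N))
        + ∑ x ∈ Finset.range N \ A, w (insert x A) * M (((A.card : ℝ) + 1) / N)
      = w A * ((A.card : ℝ) * M (A.card / N) + ((N : ℝ) - A.card) * Λ (A.card / N)))
    ∧
    ((A.card : ℝ) * w (Finset.range (A.card - 1)) * Λ (((A.card : ℝ) - 1) / N)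
        + ((N : ℝ) - A.card) * w (Finset.range (A.card + 1)) * M (((A.card : ℝ) + 1) / N)
      = w (Finset.range A.card) *
          ((A.card : ℝ) * M (A.card / N) + ((N : ℝ) - A.card) * Λ (A.card / N))) := by
  set birth : ℝ → ℝ := fun x => Λ (x / N)
  set death : ℝ → ℝ := fun x => M (x / N)
  have hw_weight (C : Finset ℕ) : w C = weight birth death C.card := by
    simp only [hw, weight, birth, death, add_div]
  have hdeath : ∀ j < N, death (j + 1) ≠ 0 := fun j hj =>
    (hMpos _ ⟨by positivity, div_le_one_of_le₀ (by exact_mod_cast hj) N.cast_nonneg⟩).ne'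
  have hcard : A.card ≤ N := by simpa using card_le_card hA
  have hbalance := weight_balance birth hcard hdeath
  simp only [hw_weight, card_range] at hbalance ⊢
  refine ⟨?_, hbalance⟩
  rw [← sum_mul, ← sum_mul, sum_card_erase A (weight birth death),
    sum_card_insert_sdiff hA (weight birth death), card_range, nsmul_eq_mul, nsmul_eq_mul,
    Nat.cast_sub hcard]
  linear_combination hbalance

/-- The stationary weights `w_N(C) = ∏_{m<|C|} f_N(m/N)`, with
`f_N(y) = Λ(y)/M(y+1/N)`, satisfy the stationary master equation of the
mean-field spin-flip dynamics, both in the set form and in the equivalent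
cardinality form (since `w_N(C)` depends only on `|C|`). -/
theorem stmt_1 (Λ M : ℝ → ℝ)
    (hΛpos : ∀ y ∈ Set.Icc (0:ℝ) 1, 0 < Λ y)
    (hMpos : ∀ y ∈ Set.Icc (0:ℝ) 1, 0 < M y)
    (hΛC1 : ContDiffOn ℝ 1 Λ (Set.Icc 0 1))
    (hMC1 : ContDiffOn ℝ 1 M (Set.Icc 0 1))
    (N : ℕ) (hN : 1 ≤ N)
    (w : Finset ℕ → ℝ)
    (hw : ∀ C : Finset ℕ,
      w C = ∏ m ∈ Finset.range C.card, Λ (m / N) / M (m / N + 1 / N))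
    (A : Finset ℕ) (hA : A ⊆ Finset.range N) :
    ((∑ x ∈ A, w (A.erase x) * Λ (((A.card : ℝ) - 1) / N))
        + ∑ x ∈ Finset.range N \ A, w (insert x A) * M (((A.card : ℝ) + 1) / N)
      = w A * ((A.card : ℝ) * M (A.card / N) + ((N : ℝ) - A.card) * Λ (A.card / N)))
    ∧
    ((A.card : ℝ) * w (Finset.range (A.card - 1)) * Λ (((A.card : ℝ) - 1) / N)
        + ((N : ℝ) - A.card) * w (Finset.range (A.card + 1)) * M (((A.card : ℝ) + 1) / N)
      = w (Finset.range A.card) *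
          ((A.card : ℝ) * M (A.card / N) + ((N : ℝ) - A.card) * Λ (A.card / N))) :=
  stmt_1_general Λ M hMpos N w hw A hA
end

section
/- (Laplace's method on [0,1].) Let F : [0,1] → ℝ be continuous, attaining its maximum at a unique point p ∈ (0,1) with F(y) < F(p) for every y ≠ p, and suppose F is twice continuously differentiable in a neighborhood of p with F''(p) < 0. Let h : [0,1] → ℝ be continuous. Then √N · ∫₀¹ h(y) · exp(N·(F(y) − F(p))) dy converges to h(p) · √(2π / (−F''(p))) as N → ∞. -/
open Filter Topology Asymptotics Set MeasureTheory

/-!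
Laplace's method. At the interior maximum `p` we have `F' p = 0`, so Taylor's theorem gives
`F y - F p = F'' p / 2 * (y - p) ^ 2 + o((y - p) ^ 2)`; together with the strict maximum on the
compact interval this yields a global bound `F y - F p ≤ -β * (y - p) ^ 2` with `β > 0`.
The substitution `y = p + t / √N` turns `√N * ∫₀¹` into an integral over
`[-√N p, √N (1 - p)]` whose integrand tends pointwise to `h p * exp (F'' p / 2 * t ^ 2)` and is
dominated by `C * exp (-β * t ^ 2)`. Dominated convergence and the Gaussian integral conclude.
-/

theorem isLittleO_sub_taylor_two {f : ℝ → ℝ} {x₀ : ℝ}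
    (hf : ∀ᶠ x in 𝓝 x₀, DifferentiableAt ℝ f x) (hf' : DifferentiableAt ℝ (deriv f) x₀) :
    (fun x ↦ f x - (f x₀ + deriv f x₀ * (x - x₀) + deriv (deriv f) x₀ / 2 * (x - x₀) ^ 2))
      =o[𝓝 x₀] fun x ↦ (x - x₀) ^ 2 := by
  set c := deriv (deriv f) x₀
  obtain ⟨r, hr, hball⟩ := Metric.eventually_nhds_iff_ball.mp hf
  let g x := f x - deriv f x₀ * (x - x₀) - c / 2 * (x - x₀) ^ 2
  -- `g' x = f' x - f' x₀ - (x - x₀) f'' x₀ = o(x - x₀)`, and integrating gains one power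
  have hg : ∀ x ∈ Metric.ball x₀ r,
      HasDerivWithinAt g (deriv f x - deriv f x₀ - (x - x₀) • c) (Metric.ball x₀ r) x := by
    intro x hx
    have hlin := ((hasDerivAt_id x).sub_const x₀).const_mul (deriv f x₀)
    have hsq := (((hasDerivAt_id x).sub_const x₀).pow 2).const_mul (c / 2)
    have : HasDerivAt g _ x := ((hball x hx).hasDerivAt.sub hlin).sub hsq
    refine (this.congr_deriv ?_).hasDerivWithinAt
    simp only [id, smul_eq_mul]; ring
  have hnhds : 𝓝[Metric.ball x₀ r] x₀ = 𝓝 x₀ :=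
    nhdsWithin_eq_nhds.mpr (Metric.ball_mem_nhds x₀ hr)
  have key := (convex_ball x₀ r).isLittleO_pow_succ_real (Metric.mem_ball_self hr) hg
    (n := 1) (by simpa [hnhds] using hasDerivAt_iff_isLittleO.mp hf'.hasDerivAt)
  rw [hnhds] at key
  refine key.congr_left fun x ↦ ?_
  simp only [g]; ring

theorem eventually_sub_le_of_isLittleO_sub_quadratic {F : ℝ → ℝ} {p c ε : ℝ}
    (hT : (fun x ↦ F x - (F p + c / 2 * (x - p) ^ 2)) =o[𝓝 p] fun x ↦ (x - p) ^ 2)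
    (hε : 0 < ε) : ∀ᶠ x in 𝓝 p, F x - F p ≤ (c / 2 + ε) * (x - p) ^ 2 := by
  filter_upwards [hT.bound hε] with x hx
  rw [Real.norm_eq_abs, Real.norm_eq_abs, abs_of_nonneg (sq_nonneg (x - p))] at hx
  linarith [le_abs_self (F x - (F p + c / 2 * (x - p) ^ 2))]

theorem exists_pos_forall_sub_le_neg_mul_sq {F : ℝ → ℝ} {K : Set ℝ} {p κ : ℝ}
    (hK : IsCompact K) (hF : ContinuousOn F K) (hmax : ∀ y ∈ K, y ≠ p → F y < F p)
    (hκ : 0 < κ) (hloc : ∀ᶠ y in 𝓝 p, F y - F p ≤ -κ * (y - p) ^ 2) :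
    ∃ β > 0, ∀ y ∈ K, F y - F p ≤ -β * (y - p) ^ 2 := by
  obtain ⟨δ, hδ, hnear⟩ := Metric.eventually_nhds_iff_ball.mp hloc
  obtain ⟨R, hR⟩ := hK.isBounded.subset_closedBall p
  obtain ⟨γ, hγ, hfar⟩ : ∃ γ > 0, ∀ y ∈ K \ Metric.ball p δ, F y - F p ≤ -γ := by
    rcases (K \ Metric.ball p δ).eq_empty_or_nonempty with hempty | hne
    · exact ⟨1, one_pos, by simp [hempty]⟩
    obtain ⟨y₀, hy₀, hy₀max⟩ :=
      (hK.diff Metric.isOpen_ball).exists_isMaxOn hne (hF.mono sdiff_subset)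
    have hy₀p : y₀ ≠ p := by rintro rfl; exact hy₀.2 (Metric.mem_ball_self hδ)
    refine ⟨F p - F y₀, sub_pos.2 (hmax y₀ hy₀.1 hy₀p), fun y hy ↦ ?_⟩
    linarith [show F y ≤ F y₀ from hy₀max hy]
  set β := min κ (γ / (R ^ 2 + 1))
  have hβκ : β ≤ κ := min_le_left _ _
  have hβγ : β * (R ^ 2 + 1) ≤ γ := (le_div_iff₀ (by positivity)).mp (min_le_right _ _)
  refine ⟨β, by positivity, fun y hy ↦ ?_⟩
  by_cases hyδ : y ∈ Metric.ball p δ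
  · nlinarith [hnear y hyδ, sq_nonneg (y - p)]
  · have hyR : (y - p) ^ 2 ≤ R ^ 2 := by
      have := hR hy
      rw [Metric.mem_closedBall, Real.dist_eq] at this
      nlinarith [abs_nonneg (y - p), sq_abs (y - p)]
    nlinarith [hfar y ⟨hy, hyδ⟩, sq_nonneg (y - p)]

theorem tendsto_add_div_sqrt_nat (p t : ℝ) :
    Tendsto (fun N : ℕ ↦ p + t / √N) atTop (𝓝 p) := by
  simpa using ((tendsto_const_nhds (x := t)).div_atTop
    (Real.tendsto_sqrt_atTop.comp tendsto_natCast_atTop_atTop)).const_add p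

theorem tendsto_nat_mul_sub_of_isLittleO_sub_quadratic {F : ℝ → ℝ} {p c : ℝ}
    (hT : (fun x ↦ F x - (F p + c / 2 * (x - p) ^ 2)) =o[𝓝 p] fun x ↦ (x - p) ^ 2) (t : ℝ) :
    Tendsto (fun N : ℕ ↦ (N : ℝ) * (F (p + t / √N) - F p)) atTop (𝓝 (c / 2 * t ^ 2)) := by
  have hsq : ∀ᶠ N : ℕ in atTop, (N : ℝ) * (p + t / √N - p) ^ 2 = t ^ 2 := by
    filter_upwards [eventually_gt_atTop 0] with N hN
    have : (0 : ℝ) < N := Nat.cast_pos.mpr hN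
    rw [add_sub_cancel_left, div_pow, Real.sq_sqrt this.le]
    field_simp
  have hrem := ((isBigO_refl (fun N : ℕ ↦ (N : ℝ)) atTop).mul_isLittleO
    (hT.comp_tendsto (tendsto_add_div_sqrt_nat p t))).congr' EventuallyEq.rfl hsq
  have hrem' := (isLittleO_one_iff ℝ).mp (hrem.trans_isBigO (isBigO_const_const _ one_ne_zero _))
  have hlim := hrem'.add_const (c / 2 * t ^ 2)
  rw [zero_add] at hlim
  refine hlim.congr' ?_
  filter_upwards [hsq] with N hN
  simp only [Function.comp_apply]
  rw [← hN]; ring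

theorem tendsto_intervalIntegral_of_dominated_convergence {ι E : Type*}
    [NormedAddCommGroup E] [NormedSpace ℝ E] {l : Filter ι} [l.IsCountablyGenerated]
    {f : ι → ℝ → E} {g : ℝ → E} {bound : ℝ → ℝ} {a b : ι → ℝ}
    (ha : Tendsto a l atBot) (hb : Tendsto b l atTop)
    (hmeas : ∀ᶠ i in l, AEStronglyMeasurable (f i) (volume.restrict (Ioc (a i) (b i))))
    (hbound : ∀ᶠ i in l, ∀ t ∈ Ioc (a i) (b i), ‖f i t‖ ≤ bound t)
    (hint : Integrable bound) (hlim : ∀ t, Tendsto (fun i ↦ f i t) l (𝓝 (g t))) :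
    Tendsto (fun i ↦ ∫ t in a i..b i, f i t) l (𝓝 (∫ t, g t)) := by
  have hmem : ∀ t, ∀ᶠ i in l, t ∈ Ioc (a i) (b i) := fun t ↦
    (ha.eventually_lt_atBot t).and (hb.eventually_ge_atTop t)
  have hind : Tendsto (fun i ↦ ∫ t, (Ioc (a i) (b i)).indicator (f i) t) l (𝓝 (∫ t, g t)) := by
    refine tendsto_integral_filter_of_dominated_convergence (fun t ↦ ‖bound t‖) ?_ ?_ hint.norm
      (ae_of_all _ fun t ↦ (hlim t).congr' ?_)
    · filter_upwards [hmeas] with i hi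
      exact (aestronglyMeasurable_indicator_iff measurableSet_Ioc).mpr hi
    · filter_upwards [hbound] with i hi
      refine ae_of_all _ fun t ↦ ?_
      by_cases ht : t ∈ Ioc (a i) (b i)
      · rw [indicator_of_mem ht]; exact (hi t ht).trans (Real.le_norm_self _)
      · rw [indicator_of_notMem ht, norm_zero]; exact norm_nonneg _
    · filter_upwards [hmem t] with i hi
      rw [indicator_of_mem hi]
  refine hind.congr' ?_
  filter_upwards [hmem 0] with i hi
  rw [intervalIntegral.integral_of_le (hi.1.le.trans hi.2), integral_indicator measurableSet_Ioc]

theorem add_div_mem_Icc {a b p s t : ℝ} (hs : 0 < s) (ht : t ∈ Icc (s * (a - p)) (s * (b - p))) :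
    p + t / s ∈ Icc a b := by
  obtain ⟨h₁, h₂⟩ := ht
  constructor
  · have := (le_div_iff₀' hs).mpr h₁; linarith
  · have := (div_le_iff₀' hs).mpr h₂; linarith

theorem tendsto_integral_laplace_rescaled {F h : ℝ → ℝ} {a b p c β : ℝ}
    (hFc : ContinuousOn F (Icc a b)) (hh : ContinuousOn h (Icc a b)) (hp : p ∈ Ioo a b)
    (hβ : 0 < β) (hglob : ∀ y ∈ Icc a b, F y - F p ≤ -β * (y - p) ^ 2)
    (hT : (fun x ↦ F x - (F p + c / 2 * (x - p) ^ 2)) =o[𝓝 p] fun x ↦ (x - p) ^ 2) :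
    Tendsto (fun N : ℕ ↦ ∫ t in √N * (a - p)..√N * (b - p),
        h (p + t / √N) * Real.exp (N * (F (p + t / √N) - F p)))
      atTop (𝓝 (∫ t, h p * Real.exp (c / 2 * t ^ 2))) := by
  obtain ⟨C, hC⟩ := isCompact_Icc.exists_bound_of_continuousOn hh
  have hsqrt : Tendsto (fun N : ℕ ↦ √(N : ℝ)) atTop atTop :=
    Real.tendsto_sqrt_atTop.comp tendsto_natCast_atTop_atTop
  have hpos : ∀ᶠ N : ℕ in atTop, 0 < √(N : ℝ) := hsqrt.eventually_gt_atTop 0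
  refine tendsto_intervalIntegral_of_dominated_convergence
    (bound := fun t ↦ C * Real.exp (-β * t ^ 2))
    (hsqrt.atTop_mul_const_of_neg (sub_neg.2 hp.1)) (hsqrt.atTop_mul_const (sub_pos.2 hp.2))
    ?_ ?_ ((integrable_exp_neg_mul_sq hβ).const_mul C) fun t ↦ ?_
  · filter_upwards [hpos] with N hN
    have hmaps : MapsTo (fun t ↦ p + t / √N) (Ioc (√N * (a - p)) (√N * (b - p))) (Icc a b) :=
      fun t ht ↦ add_div_mem_Icc hN (Ioc_subset_Icc_self ht)
    have haff : Continuous fun t : ℝ ↦ p + t / √N := by fun_prop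
    refine ContinuousOn.aestronglyMeasurable ?_ measurableSet_Ioc
    exact (hh.comp haff.continuousOn hmaps).mul (Real.continuous_exp.comp_continuousOn
      (continuousOn_const.mul ((hFc.comp haff.continuousOn hmaps).sub continuousOn_const)))
  · filter_upwards [hpos] with N hN t ht
    have hy := add_div_mem_Icc hN (Ioc_subset_Icc_self ht)
    have hexp : (N : ℝ) * (F (p + t / √N) - F p) ≤ -β * t ^ 2 := by
      have hN' : (0 : ℝ) < N := Real.sqrt_pos.mp hN
      have := mul_le_mul_of_nonneg_left (hglob _ hy) hN'.le
      rw [add_sub_cancel_left, div_pow, Real.sq_sqrt hN'.le] at this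
      calc (N : ℝ) * (F (p + t / √N) - F p) ≤ N * (-β * (t ^ 2 / N)) := this
        _ = -β * t ^ 2 := by field_simp
    rw [norm_mul, Real.norm_of_nonneg (Real.exp_pos _).le]
    exact mul_le_mul (hC _ hy) (Real.exp_le_exp.mpr hexp) (Real.exp_pos _).le
      ((norm_nonneg _).trans (hC _ hy))
  · exact ((hh.continuousAt (Icc_mem_nhds hp.1 hp.2)).tendsto.comp
      (tendsto_add_div_sqrt_nat p t)).mul ((Real.continuous_exp.tendsto _).comp
      (tendsto_nat_mul_sub_of_isLittleO_sub_quadratic hT t))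

/-- Laplace's method on `[0,1]`: if `F` is continuous with a unique
strict global maximum at an interior point `p`, is `C²` near `p` with `F''(p) < 0`,
and `h` is continuous, then
`√N ∫₀¹ h(y) exp(N(F(y) − F(p))) dy → h(p)·√(2π/(−F''(p)))`. -/
theorem stmt_4 (F h : ℝ → ℝ)
    (hFc : ContinuousOn F (Set.Icc 0 1))
    (p : ℝ) (hp : p ∈ Set.Ioo (0:ℝ) 1)
    (hmax : ∀ y ∈ Set.Icc (0:ℝ) 1, y ≠ p → F y < F p)
    (hC2 : ContDiffAt ℝ 2 F p)
    (hF'' : deriv (deriv F) p < 0)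
    (hh : ContinuousOn h (Set.Icc 0 1)) :
    Tendsto
      (fun N : ℕ =>
        Real.sqrt N * ∫ y in (0:ℝ)..1, h y * Real.exp (N * (F y - F p)))
      atTop
      (𝓝 (h p * Real.sqrt (2 * Real.pi / (-deriv (deriv F) p)))) := by
  set c := deriv (deriv F) p
  have hcrit : deriv F p = 0 := IsLocalMax.deriv_eq_zero <| by
    filter_upwards [Icc_mem_nhds hp.1 hp.2] with y hy
    rcases eq_or_ne y p with rfl | hyp
    exacts [le_rfl, (hmax y hy hyp).le]
  have hT : (fun x ↦ F x - (F p + c / 2 * (x - p) ^ 2)) =o[𝓝 p] fun x ↦ (x - p) ^ 2 := by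
    simpa [hcrit] using isLittleO_sub_taylor_two
      (hC2.eventually (by simp) |>.mono fun x hx ↦ hx.differentiableAt (by norm_num))
      ((hC2.derivWithin (m := 1) (by norm_num)).differentiableAt (by norm_num))
  obtain ⟨β, hβ, hglob⟩ := exists_pos_forall_sub_le_neg_mul_sq isCompact_Icc hFc hmax
    (κ := -c / 4) (by linarith) <| by
      simpa only [show c / 2 + -c / 4 = -(-c / 4) by ring]
        using eventually_sub_le_of_isLittleO_sub_quadratic hT (ε := -c / 4) (by linarith)
  have hgauss : ∫ t, h p * Real.exp (c / 2 * t ^ 2) = h p * √(2 * Real.pi / -c) := by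
    simp_rw [show c / 2 = -(-c / 2) by ring]
    rw [integral_const_mul, integral_gaussian]
    congr 2
    field_simp
  have hlim := tendsto_integral_laplace_rescaled hFc hh hp hβ hglob hT
  rw [hgauss] at hlim
  refine hlim.congr' ?_
  filter_upwards [eventually_gt_atTop 0] with N hN
  have hs : √(N : ℝ) ≠ 0 := by positivity
  rw [intervalIntegral.integral_comp_add_div (fun y ↦ h y * Real.exp (N * (F y - F p))) hs p]
  field_simp
  simp
end

section
/- Let x ∈ (0,1) and suppose both F''(x) = 0 (i.e., 2a₀βθσ²/(1−θx)³ = 1/(x(1−x))) and F'''(x) = 0. Then the fourth derivative satisfies F''''(x) = −2·(1 − θ + θx) / ( (1−θx)·x²·(1−x)² ), and in particular F''''(x) < 0. -/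
/-!
On `(0,1)` the entropy terms and the rational term of `F` have explicit derivatives of every order:
`F'' = 2Aθ/(1-θx)³ - 1/x - 1/(1-x)`, `F''' = 6Aθ²/(1-θx)⁴ + 1/x² - 1/(1-x)²` and
`F'''' = 24Aθ³/(1-θx)⁵ - 2/x³ - 2/(1-x)³`, where `A = a₀βσ²`. The equation `F'' = 0` reads
`2Aθ·x(1-x) = (1-θx)³`, which eliminates `A`; then `F''' = 0` becomes `3θ·x(1-x) = (1-θx)(2x-1)`,
and substituting both into `F''''` leaves the stated closed form.
-/

open Real Set Filter

theorem eqOn_deriv_of_hasDerivAt {𝕜 E : Type*} [NontriviallyNormedField 𝕜] [NormedAddCommGroup E]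
    [NormedSpace 𝕜 E] {f g g' : 𝕜 → E} {s : Set 𝕜} (hs : IsOpen s) (hfg : EqOn f g s)
    (hg : ∀ y ∈ s, HasDerivAt g (g' y) y) : EqOn (deriv f) g' s := by
  intro y hy
  rw [(eventuallyEq_of_mem (hs.mem_nhds hy) hfg).deriv_eq]
  exact (hg y hy).deriv

theorem HasDerivAt.const_div_pow {𝕜 : Type*} [NontriviallyNormedField 𝕜] {f : 𝕜 → 𝕜} {f' y : 𝕜}
    (hf : HasDerivAt f f' y) (hy : f y ≠ 0) (c : 𝕜) (n : ℕ) :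
    HasDerivAt (fun z => c / f z ^ n) (-(c * n * f') / f y ^ (n + 1)) y := by
  refine ((hasDerivAt_const y c).div (hf.pow n) (pow_ne_zero n hy)).congr_deriv ?_
  rcases n with _ | n
  · simp
  · simp only [Pi.pow_apply, Nat.add_sub_cancel]
    field_simp
    push_cast
    ring

theorem hasDerivAt_one_sub_mul (θ y : ℝ) : HasDerivAt (fun z => 1 - θ * z) (-θ) y := by
  simpa using ((hasDerivAt_id y).const_mul θ).const_sub 1

/-- The function `F` of the statement, with `p = log (c₁/c₀)`, `q = β(U-H)` and `A = a₀βσ²`. -/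
noncomputable def freeEnergy (p q A θ z : ℝ) : ℝ :=
  z * p + z * q + A * z / (1 - θ * z) - z * log z - (1 - z) * log (1 - z)

section Derivatives

variable {p q A θ y : ℝ}

theorem hasDerivAt_freeEnergy (hy₀ : y ≠ 0) (hy₁ : 1 - y ≠ 0) (hθy : 1 - θ * y ≠ 0) :
    HasDerivAt (freeEnergy p q A θ)
      (p + q + A / (1 - θ * y) ^ 2 - log y + log (1 - y)) y := by
  have hsub := (hasDerivAt_id' y).const_sub 1
  have h := ((((hasDerivAt_id' y).mul_const p).add ((hasDerivAt_id' y).mul_const q)).add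
    (((hasDerivAt_id' y).const_mul A).div (hasDerivAt_one_sub_mul θ y) hθy)).sub
    ((hasDerivAt_id' y).mul (hasDerivAt_log hy₀))
  refine (h.sub (hsub.mul (hsub.log hy₁))).congr_deriv ?_
  field_simp
  ring

theorem hasDerivAt_freeEnergy_deriv (hy₀ : y ≠ 0) (hy₁ : 1 - y ≠ 0) (hθy : 1 - θ * y ≠ 0) :
    HasDerivAt (fun z => p + q + A / (1 - θ * z) ^ 2 - log z + log (1 - z))
      (2 * A * θ / (1 - θ * y) ^ 3 - 1 / y - 1 / (1 - y)) y := by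
  have h := ((hasDerivAt_const y (p + q)).add
    ((hasDerivAt_one_sub_mul θ y).const_div_pow hθy A 2)).sub (hasDerivAt_log hy₀)
  refine (h.add (((hasDerivAt_id' y).const_sub 1).log hy₁)).congr_deriv ?_
  field_simp
  ring

theorem hasDerivAt_freeEnergy_deriv2 (hy₀ : y ≠ 0) (hy₁ : 1 - y ≠ 0) (hθy : 1 - θ * y ≠ 0) :
    HasDerivAt (fun z => 2 * A * θ / (1 - θ * z) ^ 3 - 1 / z - 1 / (1 - z))
      (6 * A * θ ^ 2 / (1 - θ * y) ^ 4 + 1 / y ^ 2 - 1 / (1 - y) ^ 2) y := by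
  have h := (((hasDerivAt_one_sub_mul θ y).const_div_pow hθy (2 * A * θ) 3).sub
    ((hasDerivAt_id' y).const_div_pow hy₀ 1 1)).sub
    (((hasDerivAt_id' y).const_sub 1).const_div_pow hy₁ 1 1)
  refine (h.congr_deriv ?_).congr_of_eventuallyEq <|
    .of_forall fun z => by simp only [pow_one, Pi.sub_apply]
  field_simp
  ring

theorem hasDerivAt_freeEnergy_deriv3 (hy₀ : y ≠ 0) (hy₁ : 1 - y ≠ 0) (hθy : 1 - θ * y ≠ 0) :
    HasDerivAt (fun z => 6 * A * θ ^ 2 / (1 - θ * z) ^ 4 + 1 / z ^ 2 - 1 / (1 - z) ^ 2)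
      (24 * A * θ ^ 3 / (1 - θ * y) ^ 5 - 2 / y ^ 3 - 2 / (1 - y) ^ 3) y := by
  have h := (((hasDerivAt_one_sub_mul θ y).const_div_pow hθy (6 * A * θ ^ 2) 4).add
    ((hasDerivAt_id' y).const_div_pow hy₀ 1 2)).sub
    (((hasDerivAt_id' y).const_sub 1).const_div_pow hy₁ 1 2)
  refine h.congr_deriv ?_
  field_simp
  ring

end Derivatives

theorem freeEnergy_deriv4_eq_of_deriv2_eq_zero_of_deriv3_eq_zero {A θ x : ℝ} (hx₀ : x ≠ 0)
    (hx₁ : 1 - x ≠ 0) (hθx : 1 - θ * x ≠ 0)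
    (h2 : 2 * A * θ / (1 - θ * x) ^ 3 - 1 / x - 1 / (1 - x) = 0)
    (h3 : 6 * A * θ ^ 2 / (1 - θ * x) ^ 4 + 1 / x ^ 2 - 1 / (1 - x) ^ 2 = 0) :
    24 * A * θ ^ 3 / (1 - θ * x) ^ 5 - 2 / x ^ 3 - 2 / (1 - x) ^ 3
      = -2 * (1 - θ + θ * x) / ((1 - θ * x) * x ^ 2 * (1 - x) ^ 2) := by
  have hA : 2 * A * θ * (x * (1 - x)) = (1 - θ * x) ^ 3 := by
    field_simp at h2
    linear_combination h2
  have hθ : 3 * θ * (x * (1 - x)) = (1 - θ * x) * (2 * x - 1) := by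
    field_simp at h3
    refine mul_right_cancel₀ (pow_ne_zero 3 hθx) ?_
    linear_combination (-(3 * θ * (x * (1 - x)))) * hA + h3
  field_simp
  linear_combination (12 * θ ^ 2 * x ^ 2 * (1 - x) ^ 2) * hA
    + (4 * θ * x * (1 - x) * (1 - θ * x) ^ 3 + 2 * (1 - θ * x) ^ 4 * (2 * x - 1)) * hθ

theorem stmt_12_general (θ a₀ c₀ c₁ H U β σ : ℝ)
    (hθ : θ ∈ Set.Ioo (0:ℝ) 1)
    (F : ℝ → ℝ)
    (hF : ∀ x ∈ Set.Ioo (0:ℝ) 1,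
      F x = x * Real.log (c₁ / c₀) + x * β * (U - H)
        + a₀ * β * σ ^ 2 * x / (1 - θ * x)
        - x * Real.log x - (1 - x) * Real.log (1 - x))
    (x : ℝ) (hx : x ∈ Set.Ioo (0:ℝ) 1)
    (h2 : deriv (deriv F) x = 0)
    (h3 : deriv (deriv (deriv F)) x = 0) :
    deriv (deriv (deriv (deriv F))) x
      = -2 * (1 - θ + θ * x) / ((1 - θ * x) * x ^ 2 * (1 - x) ^ 2)
    ∧ deriv (deriv (deriv (deriv F))) x < 0 := by
  have hθy : ∀ y ∈ Ioo (0:ℝ) 1, 0 < 1 - θ * y := fun y hy => by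
    nlinarith [hy.1, hy.2, hθ.1, hθ.2]
  have hne : ∀ y ∈ Ioo (0:ℝ) 1, y ≠ 0 ∧ 1 - y ≠ 0 ∧ 1 - θ * y ≠ 0 := fun y hy =>
    ⟨hy.1.ne', (sub_pos.2 hy.2).ne', (hθy y hy).ne'⟩
  have d0 : EqOn F (freeEnergy (log (c₁ / c₀)) (β * (U - H)) (a₀ * β * σ ^ 2) θ) (Ioo 0 1) :=
    fun y hy => by rw [hF y hy, freeEnergy]; ring
  have d1 := eqOn_deriv_of_hasDerivAt isOpen_Ioo d0 fun y hy =>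
    hasDerivAt_freeEnergy (hne y hy).1 (hne y hy).2.1 (hne y hy).2.2
  have d2 := eqOn_deriv_of_hasDerivAt isOpen_Ioo d1 fun y hy =>
    hasDerivAt_freeEnergy_deriv (hne y hy).1 (hne y hy).2.1 (hne y hy).2.2
  have d3 := eqOn_deriv_of_hasDerivAt isOpen_Ioo d2 fun y hy =>
    hasDerivAt_freeEnergy_deriv2 (hne y hy).1 (hne y hy).2.1 (hne y hy).2.2
  have d4 := eqOn_deriv_of_hasDerivAt isOpen_Ioo d3 fun y hy =>
    hasDerivAt_freeEnergy_deriv3 (hne y hy).1 (hne y hy).2.1 (hne y hy).2.2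
  have hd4 := (d4 hx).trans <| freeEnergy_deriv4_eq_of_deriv2_eq_zero_of_deriv3_eq_zero
    (hne x hx).1 (hne x hx).2.1 (hne x hx).2.2 ((d2 hx).symm.trans h2) ((d3 hx).symm.trans h3)
  rw [hd4]
  refine ⟨rfl, div_neg_of_neg_of_pos ?_ ?_⟩
  · linarith [mul_pos hθ.1 hx.1, hθ.2]
  · exact mul_pos (mul_pos (hθy x hx) (pow_pos hx.1 2)) (pow_pos (sub_pos.2 hx.2) 2)

/-- If `x ∈ (0,1)` and both `F''(x) = 0` and `F'''(x) = 0`, then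
`F''''(x) = −2(1−θ+θx)/((1−θx)x²(1−x)²)`, which is in particular negative. -/
theorem stmt_12 (θ a₀ c₀ c₁ H U β σ : ℝ)
    (hθ : θ ∈ Set.Ioo (0:ℝ) 1) (ha₀ : 0 < a₀) (hc₀ : 0 < c₀) (hc₁ : 0 < c₁)
    (hβ : 0 < β) (hσ : 0 ≤ σ)
    (F : ℝ → ℝ)
    (hF : ∀ x ∈ Set.Ioo (0:ℝ) 1,
      F x = x * Real.log (c₁ / c₀) + x * β * (U - H)
        + a₀ * β * σ ^ 2 * x / (1 - θ * x)
        - x * Real.log x - (1 - x) * Real.log (1 - x))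
    (x : ℝ) (hx : x ∈ Set.Ioo (0:ℝ) 1)
    (h2 : deriv (deriv F) x = 0)
    (h3 : deriv (deriv (deriv F)) x = 0) :
    deriv (deriv (deriv (deriv F))) x
      = -2 * (1 - θ + θ * x) / ((1 - θ * x) * x ^ 2 * (1 - x) ^ 2)
    ∧ deriv (deriv (deriv (deriv F))) x < 0 :=
  stmt_12_general θ a₀ c₀ c₁ H U β σ hθ F hF x hx h2 h3
end

section
/- Let Λ and M be strictly positive continuously differentiable functions on [0,1], f = Λ/M, and f_N(y) = Λ(y)/M(y+1/N). Let (k_N) be a sequence of integers with 0 ≤ k_N ≤ N and k_N/N → y for some y ∈ (0,1). Then the stationary weight satisfies the asymptotics [ ∏_{m=0}^{k_N−1} f_N(m/N) ] · exp( −N·∫₀^{k_N/N} ln f(z) dz ) → √( Λ(0)·M(0) / (Λ(y)·M(y)) ) as N → ∞. -/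
/-!
With `g = log (Λ / M)`, the shift by `1 / N` in the denominator telescopes:
`∏_{m<k} Λ(m/N) / M((m+1)/N) = exp (∑_{m<k} g(m/N) + log M(0) - log M(k/N))`.
As `g` is `C¹`, its derivative is uniformly continuous, so on every cell of width `1/N` the
trapezoidal rule approximates `∫ g` up to `o(1/N²)`. Summing over at most `N` cells,
`N ∫₀^{k/N} g = ∑_{m<k} g(m/N) + (g(k/N) - g(0))/2 + o(1)`. Hence the exponent tends to
`(g(0) - g(y))/2 + log M(0) - log M(y) = log (Λ(0) M(0) / (Λ(y) M(y))) / 2`.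
-/

open Filter Topology Set Finset Real

theorem natCast_div_mem_Icc {m N : ℕ} (h : m ≤ N) : (m / N : ℝ) ∈ Icc (0 : ℝ) 1 :=
  ⟨by positivity, div_le_one_of_le₀ (by exact_mod_cast h) N.cast_nonneg⟩

theorem tendsto_nhdsWithin_Icc_of_tendsto_natCast_div {k : ℕ → ℕ} (hk : ∀ N, k N ≤ N) {y : ℝ}
    (hy : Tendsto (fun N : ℕ => (k N : ℝ) / N) atTop (𝓝 y)) :
    Tendsto (fun N : ℕ => (k N : ℝ) / N) atTop (𝓝[Icc 0 1] y) :=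
  tendsto_nhdsWithin_iff.2 ⟨hy, Eventually.of_forall fun N => natCast_div_mem_Icc (hk N)⟩

theorem mem_Icc_of_tendsto_natCast_div {k : ℕ → ℕ} (hk : ∀ N, k N ≤ N) {y : ℝ}
    (hy : Tendsto (fun N : ℕ => (k N : ℝ) / N) atTop (𝓝 y)) : y ∈ Icc (0 : ℝ) 1 :=
  isClosed_Icc.mem_of_tendsto hy (Eventually.of_forall fun N => natCast_div_mem_Icc (hk N))

theorem abs_integral_sub_trapezoid_le {g : ℝ → ℝ} {a b c ε : ℝ} (hab : a ≤ b)
    (hg : IntervalIntegrable g MeasureTheory.volume a b)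
    (hlin : ∀ t ∈ Icc a b, |g t - g a - c * (t - a)| ≤ ε * (b - a)) :
    |(∫ t in a..b, g t) - (b - a) * (g a + g b) / 2| ≤ 3 / 2 * ε * (b - a) ^ 2 := by
  have hint : ∫ t in a..b, (g t - g a - c * (t - a)) =
      (∫ t in a..b, g t) - (b - a) * g a - c * (b - a) ^ 2 / 2 := by
    rw [intervalIntegral.integral_sub (hg.sub intervalIntegrable_const)
        (Continuous.intervalIntegrable (by fun_prop) _ _),
      intervalIntegral.integral_sub hg intervalIntegrable_const,
      intervalIntegral.integral_const_mul,
      intervalIntegral.integral_comp_sub_right (fun t => t), integral_id,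
      intervalIntegral.integral_const, smul_eq_mul]
    ring
  have hbound : |∫ t in a..b, (g t - g a - c * (t - a))| ≤ ε * (b - a) * (b - a) := by
    have := intervalIntegral.norm_integral_le_of_norm_le_const (a := a) (b := b)
      (f := fun t => g t - g a - c * (t - a)) (C := ε * (b - a)) fun t ht => by
        rw [uIoc_of_le hab] at ht
        exact hlin t (Ioc_subset_Icc_self ht)
    rwa [Real.norm_eq_abs, abs_of_nonneg (sub_nonneg.2 hab)] at this
  have hend : |(b - a) / 2 * (g b - g a - c * (b - a))| ≤ (b - a) / 2 * (ε * (b - a)) := by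
    rw [abs_mul, abs_of_nonneg (by linarith)]
    exact mul_le_mul_of_nonneg_left (hlin b (right_mem_Icc.2 hab)) (by linarith)
  -- the trapezoidal rule is exact on the affine function `t ↦ g a + c * (t - a)`
  calc |(∫ t in a..b, g t) - (b - a) * (g a + g b) / 2|
      = |(∫ t in a..b, (g t - g a - c * (t - a))) - (b - a) / 2 * (g b - g a - c * (b - a))| := by
        rw [hint]; ring_nf
    _ ≤ ε * (b - a) * (b - a) + (b - a) / 2 * (ε * (b - a)) :=
        (abs_sub _ _).trans (add_le_add hbound hend)
    _ = 3 / 2 * ε * (b - a) ^ 2 := by ring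

theorem exists_pos_abs_sub_sub_mul_le_of_hasDerivWithinAt {s : Set ℝ} (hs : IsCompact s)
    (hconv : Convex ℝ s) {g g' : ℝ → ℝ} (hg : ∀ x ∈ s, HasDerivWithinAt g (g' x) s x)
    (hg' : ContinuousOn g' s) {ε : ℝ} (hε : 0 < ε) :
    ∃ δ > 0, ∀ x ∈ s, ∀ y ∈ s, |y - x| < δ → |g y - g x - g' x * (y - x)| ≤ ε * |y - x| := by
  obtain ⟨δ, hδ, hclose⟩ :=
    Metric.uniformContinuousOn_iff_le.1 (hs.uniformContinuousOn_of_continuous hg') ε hε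
  refine ⟨δ, hδ, fun x hx y hy hxy => ?_⟩
  -- mean value theorem for `u ↦ g u - g' x * u` on the convex set `s ∩ ball x δ`
  have hconv' : Convex ℝ (s ∩ Metric.ball x δ) := hconv.inter (convex_ball x δ)
  have hderiv : ∀ u ∈ s ∩ Metric.ball x δ,
      HasDerivWithinAt (fun u => g u - g' x * u) (g' u - g' x) (s ∩ Metric.ball x δ) u :=
    fun u hu => ((hg u hu.1).mono inter_subset_left).sub
      (by simpa using (hasDerivWithinAt_id u _).const_mul (g' x))
  have hsmall : ∀ u ∈ s ∩ Metric.ball x δ, ‖g' u - g' x‖ ≤ ε := fun u hu =>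
    hclose u hu.1 x hx (Metric.mem_ball.1 hu.2).le
  have := hconv'.norm_image_sub_le_of_norm_hasDerivWithin_le hderiv hsmall
    ⟨hx, Metric.mem_ball_self hδ⟩ ⟨hy, by rwa [Metric.mem_ball, Real.dist_eq]⟩
  simp only [Real.norm_eq_abs] at this
  convert this using 2
  ring

theorem abs_sum_add_sub_integral_le {g : ℝ → ℝ} (hg : ContinuousOn g (Icc 0 1)) {N n : ℕ}
    (hN : 0 < N) (hn : n ≤ N) {η : ℝ}
    (hcell : ∀ m < n, |(∫ t in (m / N : ℝ)..((m + 1 : ℕ) / N), g t) -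
      1 / N * (g (m / N) + g ((m + 1 : ℕ) / N)) / 2| ≤ η) :
    |∑ m ∈ range n, g (m / N) + (g (n / N) - g 0) / 2 - N * ∫ t in (0 : ℝ)..(n / N), g t|
      ≤ N * n * η := by
  have hN' : (N : ℝ) ≠ 0 := by positivity
  have hsplit := intervalIntegral.sum_integral_adjacent_intervals (f := g)
    (a := fun m : ℕ => (m / N : ℝ)) (μ := MeasureTheory.volume) (n := n) fun m hm =>
      (hg.mono (uIcc_subset_Icc (natCast_div_mem_Icc (by omega))
        (natCast_div_mem_Icc (by omega)))).intervalIntegrable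
  have htel := Finset.sum_range_sub (fun m : ℕ => g (m / N)) n
  simp only [Nat.cast_zero, zero_div] at hsplit htel
  have hdecomp :
      ∑ m ∈ range n, g (m / N) + (g (n / N) - g 0) / 2 - N * ∫ t in (0 : ℝ)..(n / N), g t
      = -N * ∑ m ∈ range n, ((∫ t in (m / N : ℝ)..((m + 1 : ℕ) / N), g t) -
          1 / N * (g (m / N) + g ((m + 1 : ℕ) / N)) / 2) := by
    rw [← hsplit, ← htel]
    simp only [Finset.mul_sum, Finset.sum_div, ← Finset.sum_add_distrib, ← Finset.sum_sub_distrib]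
    refine Finset.sum_congr rfl fun m _ => ?_
    field_simp
    ring
  rw [hdecomp, abs_mul, abs_neg, Nat.abs_cast, mul_assoc]
  gcongr
  calc _ ≤ _ := Finset.abs_sum_le_sum_abs _ _
    _ ≤ _ := Finset.sum_le_card_nsmul _ _ _ fun m hm => hcell m (Finset.mem_range.1 hm)
    _ = n * η := by simp

theorem tendsto_sum_add_sub_integral {g : ℝ → ℝ} (hg : ContDiffOn ℝ 1 g (Icc 0 1))
    {k : ℕ → ℕ} (hk : ∀ N, k N ≤ N) :
    Tendsto (fun N : ℕ => ∑ m ∈ range (k N), g (m / N) + (g (k N / N) - g 0) / 2 -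
      N * ∫ t in (0 : ℝ)..(k N / N), g t) atTop (𝓝 0) := by
  rw [Metric.tendsto_atTop]
  intro ε hε
  obtain ⟨δ, hδ, hlin⟩ := exists_pos_abs_sub_sub_mul_le_of_hasDerivWithinAt isCompact_Icc
    (convex_Icc 0 1) (fun x hx => (hg.differentiableOn one_ne_zero x hx).hasDerivWithinAt)
    (hg.continuousOn_derivWithin (uniqueDiffOn_Icc zero_lt_one) le_rfl) (half_pos hε)
  obtain ⟨N₀, hN₀⟩ := exists_nat_one_div_lt hδ
  refine ⟨N₀ + 1, fun N hN => ?_⟩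
  have hNpos : (0 : ℝ) < N := by exact_mod_cast (show 0 < N by omega)
  have hstep : (1 : ℝ) / N < δ :=
    (one_div_le_one_div_of_le (by positivity) (by exact_mod_cast hN)).trans_lt hN₀
  have hcell : ∀ m < k N, |(∫ t in (m / N : ℝ)..((m + 1 : ℕ) / N), g t) -
      1 / N * (g (m / N) + g ((m + 1 : ℕ) / N)) / 2| ≤ 3 / 2 * (ε / 2) * (1 / N) ^ 2 := by
    intro m hm
    have hmN := hk N
    have hwidth : ((m + 1 : ℕ) / N : ℝ) - m / N = 1 / N := by push_cast; ring
    have ha := natCast_div_mem_Icc (N := N) (m := m) (by omega)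
    have hb := natCast_div_mem_Icc (N := N) (m := m + 1) (by omega)
    rw [← hwidth]
    refine abs_integral_sub_trapezoid_le (c := derivWithin g (Icc 0 1) (m / N))
      (by linarith [one_div_pos.2 hNpos]) ?_ fun t ht => ?_
    · exact (hg.continuousOn.mono (uIcc_subset_Icc ha hb)).intervalIntegrable
    · have ht' : t ∈ Icc (0 : ℝ) 1 := ⟨ha.1.trans ht.1, ht.2.trans hb.2⟩
      have hdist : |t - m / N| ≤ 1 / N := by
        rw [abs_of_nonneg (by linarith [ht.1])]; linarith [ht.2]
      rw [hwidth]
      exact (hlin _ ha t ht' (hdist.trans_lt hstep)).trans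
        (mul_le_mul_of_nonneg_left hdist (by positivity))
  rw [Real.dist_eq, sub_zero]
  calc _ ≤ N * k N * (3 / 2 * (ε / 2) * (1 / N) ^ 2) :=
        abs_sum_add_sub_integral_le hg.continuousOn (by omega) (hk N) hcell
    _ = 3 / 4 * ε * (k N / N) := by field_simp; ring
    _ ≤ 3 / 4 * ε * 1 := by gcongr; exact (natCast_div_mem_Icc (hk N)).2
    _ < ε := by linarith

theorem tendsto_sum_sub_integral {g : ℝ → ℝ} (hg : ContDiffOn ℝ 1 g (Icc 0 1))
    {k : ℕ → ℕ} (hk : ∀ N, k N ≤ N) {y : ℝ}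
    (hy : Tendsto (fun N : ℕ => (k N : ℝ) / N) atTop (𝓝 y)) :
    Tendsto (fun N : ℕ => ∑ m ∈ range (k N), g (m / N) - N * ∫ t in (0 : ℝ)..(k N / N), g t)
      atTop (𝓝 ((g 0 - g y) / 2)) := by
  have hgy := (hg.continuousOn y (mem_Icc_of_tendsto_natCast_div hk hy)).tendsto.comp
    (tendsto_nhdsWithin_Icc_of_tendsto_natCast_div hk hy)
  refine (((tendsto_sum_add_sub_integral hg hk).add ((hgy.const_sub (g 0)).div_const 2)).congr
    fun N => ?_).trans (by rw [zero_add])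
  simp only [Function.comp_apply]
  ring

theorem prod_div_eq_exp_sum_log {Λ M : ℝ → ℝ} {x : ℕ → ℝ} {n : ℕ}
    (hΛ : ∀ m < n, 0 < Λ (x m)) (hM : ∀ m ≤ n, 0 < M (x m)) :
    ∏ m ∈ range n, Λ (x m) / M (x (m + 1)) =
      exp (∑ m ∈ range n, log (Λ (x m) / M (x m)) + (log (M (x 0)) - log (M (x n)))) := by
  rw [← Finset.sum_range_sub' (fun m => log (M (x m))), ← Finset.sum_add_distrib, exp_sum]
  refine Finset.prod_congr rfl fun m hm => ?_
  have hm := Finset.mem_range.1 hm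
  have hΛm := hΛ m hm
  have hMm := hM m hm.le
  have hMm' := hM (m + 1) hm
  rw [exp_add, exp_sub, exp_log (by positivity), exp_log hMm, exp_log hMm']
  field_simp

theorem prod_div_mul_exp_integral_eq {Λ M : ℝ → ℝ} (hΛ : ∀ z ∈ Icc (0 : ℝ) 1, 0 < Λ z)
    (hM : ∀ z ∈ Icc (0 : ℝ) 1, 0 < M z) {n N : ℕ} (hn : n ≤ N) :
    (∏ m ∈ range n, Λ (m / N) / M (m / N + 1 / N)) *
        exp (-(N : ℝ) * ∫ z in (0 : ℝ)..(n / N), log (Λ z / M z)) =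
      exp ((∑ m ∈ range n, log (Λ (m / N) / M (m / N)) -
        N * ∫ z in (0 : ℝ)..(n / N), log (Λ z / M z)) + (log (M 0) - log (M (n / N)))) := by
  have hprod := prod_div_eq_exp_sum_log (Λ := Λ) (M := M) (x := fun m : ℕ => (m / N : ℝ))
    (n := n)
    (fun m hm => hΛ _ (natCast_div_mem_Icc (by omega)))
    (fun m hm => hM _ (natCast_div_mem_Icc (by omega)))
  simp only [Nat.cast_zero, zero_div, Nat.cast_succ, add_div] at hprod
  rw [hprod, ← exp_add]
  congr 1
  ring

theorem sqrt_mul_div_mul_eq_exp {a b c d : ℝ} (ha : 0 < a) (hb : 0 < b) (hc : 0 < c)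
    (hd : 0 < d) :
    √(a * b / (c * d)) = exp ((log (a / b) - log (c / d)) / 2 + (log b - log d)) := by
  rw [← exp_log (show 0 < a * b / (c * d) by positivity), ← exp_half]
  congr 1
  rw [log_div, log_div, log_div, log_mul, log_mul] <;> first | positivity | ring

theorem stmt_15_general (Λ M : ℝ → ℝ)
    (hΛpos : ∀ y ∈ Set.Icc (0:ℝ) 1, 0 < Λ y)
    (hMpos : ∀ y ∈ Set.Icc (0:ℝ) 1, 0 < M y)
    (hΛC1 : ContDiffOn ℝ 1 Λ (Set.Icc 0 1))
    (hMC1 : ContDiffOn ℝ 1 M (Set.Icc 0 1))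
    (y : ℝ)
    (k : ℕ → ℕ) (hk : ∀ N, k N ≤ N)
    (hklim : Tendsto (fun N : ℕ => (k N : ℝ) / N) atTop (𝓝 y)) :
    Tendsto
      (fun N : ℕ =>
        (∏ m ∈ Finset.range (k N), Λ (m / N) / M (m / N + 1 / N)) *
          Real.exp (-(N : ℝ) * ∫ z in (0:ℝ)..((k N : ℝ) / N), Real.log (Λ z / M z)))
      atTop
      (𝓝 (Real.sqrt (Λ 0 * M 0 / (Λ y * M y)))) := by
  have hy := mem_Icc_of_tendsto_natCast_div hk hklim
  have h0 : (0 : ℝ) ∈ Icc (0 : ℝ) 1 := left_mem_Icc.2 zero_le_one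
  have hlogf : ContDiffOn ℝ 1 (fun z => log (Λ z / M z)) (Icc 0 1) :=
    (hΛC1.div hMC1 fun z hz => (hMpos z hz).ne').log
      fun z hz => (div_pos (hΛpos z hz) (hMpos z hz)).ne'
  have hlogM := ((hMC1.continuousOn.log fun z hz => (hMpos z hz).ne') y hy).tendsto.comp
    (tendsto_nhdsWithin_Icc_of_tendsto_natCast_div hk hklim)
  have hexponent := (tendsto_sum_sub_integral hlogf hk hklim).add (hlogM.const_sub (log (M 0)))
  rw [sqrt_mul_div_mul_eq_exp (hΛpos 0 h0) (hMpos 0 h0) (hΛpos y hy) (hMpos y hy)]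
  exact ((continuous_exp.tendsto _).comp hexponent).congr
    fun N => (prod_div_mul_exp_integral_eq hΛpos hMpos (hk N)).symm

/-- Asymptotics of the stationary weight: if `k_N/N → y ∈ (0,1)`,
then `(∏_{m<k_N} f_N(m/N)) · exp(−N ∫₀^{k_N/N} ln f) → √(Λ(0)M(0)/(Λ(y)M(y)))`,
where `f = Λ/M` and `f_N(y) = Λ(y)/M(y + 1/N)`. -/
theorem stmt_15 (Λ M : ℝ → ℝ)
    (hΛpos : ∀ y ∈ Set.Icc (0:ℝ) 1, 0 < Λ y)
    (hMpos : ∀ y ∈ Set.Icc (0:ℝ) 1, 0 < M y)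
    (hΛC1 : ContDiffOn ℝ 1 Λ (Set.Icc 0 1))
    (hMC1 : ContDiffOn ℝ 1 M (Set.Icc 0 1))
    (y : ℝ) (hy : y ∈ Set.Ioo (0:ℝ) 1)
    (k : ℕ → ℕ) (hk : ∀ N, k N ≤ N)
    (hklim : Tendsto (fun N : ℕ => (k N : ℝ) / N) atTop (𝓝 y)) :
    Tendsto
      (fun N : ℕ =>
        (∏ m ∈ Finset.range (k N), Λ (m / N) / M (m / N + 1 / N)) *
          Real.exp (-(N : ℝ) * ∫ z in (0:ℝ)..((k N : ℝ) / N), Real.log (Λ z / M z)))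
      atTop
      (𝓝 (Real.sqrt (Λ 0 * M 0 / (Λ y * M y)))) :=
  stmt_15_general Λ M hΛpos hMpos hΛC1 hMC1 y k hk hklim
end
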